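/- arXiv:2605.02470 — 3 statements merged into one kernel-verified Lean document; each statement's English description precedes it below -/
import Mathlib

section
/- Let n ≥ 1 be an integer, let 2 ≤ p < q be reals, let a ≥ 0 and ν > 0. Let A : ℝⁿ → ℝⁿ be continuously differentiable and suppose that for all z, ζ ∈ ℝⁿ one has ν·(‖z‖^{p−2} + a·‖z‖^{q−2})·‖ζ‖² ≤ ⟪(DA(z))ζ, ζ⟫, where DA(z) is the (Fréchet) derivative of A at z. Then there exists a constant c ≥ 1, depending only on n, p, q and ν, such that for all z₁, z₂ ∈ ℝⁿ: ‖z₁−z₂‖^p + a·‖z₁−z₂‖^q ≤ c·⟪A(z₁) − A(z₂), z₁ − z₂⟫. -/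
open scoped RealInnerProductSpace

/-!
Put `ζ = z₁ - z₂` and `g t = ⟪A (z₂ + t • ζ), ζ⟫`, so that `g 1 - g 0` is the right-hand side and
`g'` is bounded below by the coercivity hypothesis; in particular `g` is nondecreasing. The mean
value theorem on `[0, 1/4]` and on `[3/4, 1]` gives points `ξ₁, ξ₂` with `g' ξᵢ ≤ 4 (g 1 - g 0)`.
Since `ξ₂ - ξ₁ ≥ 1/2`, one of `z₂ + ξᵢ • ζ` has norm at least `‖ζ‖ / 4`, and there the
degenerate weight `‖z‖^(s-2)` is at least `4^(2-q) ‖ζ‖^(s-2)` for `s = p, q`.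
-/

open Set

theorem exists_mem_Ioo_mul_le_sub_of_hasDerivAt_nonneg {g D : ℝ → ℝ}
    (hg : ∀ t, HasDerivAt g (D t) t) (hD : ∀ t, 0 ≤ D t) {a s u b : ℝ}
    (has : a ≤ s) (hsu : s < u) (hub : u ≤ b) :
    ∃ ξ ∈ Ioo s u, (u - s) * D ξ ≤ g b - g a := by
  obtain ⟨ξ, hξ, hslope⟩ := exists_hasDerivAt_eq_slope g D hsu
    (fun t _ => (hg t).continuousAt.continuousWithinAt) (fun t _ => hg t)
  have hmono : Monotone g := monotone_of_deriv_nonneg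
    (fun t => (hg t).differentiableAt) (fun t => (hg t).deriv ▸ hD t)
  refine ⟨ξ, hξ, ?_⟩
  rw [hslope, mul_div_cancel₀ _ (sub_ne_zero.mpr hsu.ne')]
  linarith [hmono has, hmono hub]

theorem rpow_le_rpow_sub_two_mul_sq {x y k s q : ℝ} (hx : 0 ≤ x) (hxy : x ≤ k * y)
    (hk : 1 ≤ k) (hs : 2 ≤ s) (hsq : s ≤ q) :
    x ^ s ≤ k ^ (q - 2) * (y ^ (s - 2) * x ^ 2) := by
  have hy : 0 ≤ y := nonneg_of_mul_nonneg_right (hx.trans hxy) (by linarith)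
  calc x ^ s = x ^ (s - 2) * x ^ 2 := by
        rw [← Real.rpow_natCast, ← Real.rpow_add' hx (by norm_num; linarith)]
        norm_num
    _ ≤ (k * y) ^ (s - 2) * x ^ 2 := by gcongr
    _ = k ^ (s - 2) * (y ^ (s - 2) * x ^ 2) := by
        rw [Real.mul_rpow (by linarith) hy, mul_assoc]
    _ ≤ k ^ (q - 2) * (y ^ (s - 2) * x ^ 2) := by
        gcongr

theorem norm_le_four_mul_norm_add_smul_or {F : Type*} [SeminormedAddCommGroup F] [NormedSpace ℝ F]
    (z ζ : F) {t₁ t₂ : ℝ} (ht : 1 / 2 ≤ t₂ - t₁) :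
    ‖ζ‖ ≤ 4 * ‖z + t₁ • ζ‖ ∨ ‖ζ‖ ≤ 4 * ‖z + t₂ • ζ‖ := by
  have hdist : (t₂ - t₁) * ‖ζ‖ ≤ ‖z + t₁ • ζ‖ + ‖z + t₂ • ζ‖ := by
    calc (t₂ - t₁) * ‖ζ‖ = ‖(z + t₂ • ζ) - (z + t₁ • ζ)‖ := by
          rw [add_sub_add_left_eq_sub, ← sub_smul, norm_smul, Real.norm_of_nonneg (by linarith)]
      _ ≤ ‖z + t₂ • ζ‖ + ‖z + t₁ • ζ‖ := norm_sub_le _ _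
      _ = ‖z + t₁ • ζ‖ + ‖z + t₂ • ζ‖ := add_comm _ _
  by_contra! h
  nlinarith [norm_nonneg ζ]

section InnerProductSpace

variable {E : Type*} [NormedAddCommGroup E] [InnerProductSpace ℝ E]

theorem hasDerivAt_inner_comp_add_smul {A : E → E} (hA : Differentiable ℝ A) (z ζ : E) (t : ℝ) :
    HasDerivAt (fun t : ℝ => ⟪A (z + t • ζ), ζ⟫) ⟪fderiv ℝ A (z + t • ζ) ζ, ζ⟫ t := by
  have hline : HasDerivAt (fun t : ℝ => z + t • ζ) ζ t := by
    simpa using ((hasDerivAt_id t).smul_const ζ).const_add z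
  simpa using ((hA _).hasFDerivAt.comp_hasDerivAt t hline).inner ℝ (hasDerivAt_const t ζ)

theorem mul_norm_rpow_add_le_inner_sub {A : E → E} (hA : Differentiable ℝ A) {p q ν a : ℝ}
    (hp : 2 ≤ p) (hpq : p ≤ q) (hν : 0 ≤ ν) (ha : 0 ≤ a)
    (hcoer : ∀ z ζ : E, ν * (‖z‖ ^ (p - 2) + a * ‖z‖ ^ (q - 2)) * ‖ζ‖ ^ 2 ≤ ⟪fderiv ℝ A z ζ, ζ⟫)
    (z₁ z₂ : E) :
    ν * (‖z₁ - z₂‖ ^ p + a * ‖z₁ - z₂‖ ^ q) ≤ 4 ^ (q - 1) * ⟪A z₁ - A z₂, z₁ - z₂⟫ := by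
  set ζ := z₁ - z₂
  set g : ℝ → ℝ := fun t => ⟪A (z₂ + t • ζ), ζ⟫
  set D : ℝ → ℝ := fun t => ⟪fderiv ℝ A (z₂ + t • ζ) ζ, ζ⟫
  have hg : ∀ t, HasDerivAt g (D t) t := hasDerivAt_inner_comp_add_smul hA z₂ ζ
  have hD : ∀ t, 0 ≤ D t := fun t => (hcoer _ ζ).trans' (by positivity)
  have hg10 : g 1 - g 0 = ⟪A z₁ - A z₂, ζ⟫ := by simp [g, ζ, inner_sub_left]
  have hfar : ∀ t, ‖ζ‖ ≤ 4 * ‖z₂ + t • ζ‖ →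
      ν * (‖ζ‖ ^ p + a * ‖ζ‖ ^ q) ≤ 4 ^ (q - 2) * D t := by
    intro t ht
    have hpow : ∀ s, 2 ≤ s → s ≤ q →
        ‖ζ‖ ^ s ≤ 4 ^ (q - 2) * (‖z₂ + t • ζ‖ ^ (s - 2) * ‖ζ‖ ^ 2) := fun s hs hsq =>
      rpow_le_rpow_sub_two_mul_sq (norm_nonneg ζ) ht (by norm_num) hs hsq
    calc ν * (‖ζ‖ ^ p + a * ‖ζ‖ ^ q)
        ≤ ν * (4 ^ (q - 2) * (‖z₂ + t • ζ‖ ^ (p - 2) * ‖ζ‖ ^ 2)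
            + a * (4 ^ (q - 2) * (‖z₂ + t • ζ‖ ^ (q - 2) * ‖ζ‖ ^ 2))) := by
          gcongr
          exacts [hpow p hp hpq, hpow q (hp.trans hpq) le_rfl]
      _ = 4 ^ (q - 2) * (ν * (‖z₂ + t • ζ‖ ^ (p - 2) + a * ‖z₂ + t • ζ‖ ^ (q - 2)) * ‖ζ‖ ^ 2) := by
          ring
      _ ≤ 4 ^ (q - 2) * D t := by
          gcongr
          exact hcoer _ ζ
  obtain ⟨ξ, hξ, hDξ⟩ : ∃ ξ, ‖ζ‖ ≤ 4 * ‖z₂ + ξ • ζ‖ ∧ D ξ ≤ 4 * (g 1 - g 0) := by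
    obtain ⟨ξ₁, hξ₁, h₁⟩ := exists_mem_Ioo_mul_le_sub_of_hasDerivAt_nonneg hg hD
      le_rfl (by norm_num : (0 : ℝ) < 1 / 4) (by norm_num : (1 / 4 : ℝ) ≤ 1)
    obtain ⟨ξ₂, hξ₂, h₂⟩ := exists_mem_Ioo_mul_le_sub_of_hasDerivAt_nonneg hg hD
      (by norm_num : (0 : ℝ) ≤ 3 / 4) (by norm_num : (3 / 4 : ℝ) < 1) le_rfl
    rcases norm_le_four_mul_norm_add_smul_or z₂ ζ (by linarith [hξ₁.2, hξ₂.1] : 1 / 2 ≤ ξ₂ - ξ₁)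
      with h | h
    exacts [⟨ξ₁, h, by linarith⟩, ⟨ξ₂, h, by linarith⟩]
  calc ν * (‖ζ‖ ^ p + a * ‖ζ‖ ^ q) ≤ 4 ^ (q - 2) * D ξ := hfar ξ hξ
    _ ≤ 4 ^ (q - 2) * (4 * (g 1 - g 0)) := by gcongr
    _ = 4 ^ (q - 1) * ⟪A z₁ - A z₂, ζ⟫ := by
        rw [← hg10, ← mul_assoc, ← Real.rpow_add_one (by norm_num)]
        ring_nf

end InnerProductSpace

theorem stmt_3_general (n : ℕ) (p q ν : ℝ) (hp : 2 ≤ p) (hpq : p < q) (hν : 0 < ν) :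
    ∃ c : ℝ, 1 ≤ c ∧
      ∀ (a : ℝ), 0 ≤ a →
      ∀ (A : EuclideanSpace ℝ (Fin n) → EuclideanSpace ℝ (Fin n)), ContDiff ℝ 1 A →
      (∀ z ζ : EuclideanSpace ℝ (Fin n),
        ν * (‖z‖ ^ (p - 2) + a * ‖z‖ ^ (q - 2)) * ‖ζ‖ ^ 2 ≤ ⟪(fderiv ℝ A z) ζ, ζ⟫) →
      ∀ z₁ z₂ : EuclideanSpace ℝ (Fin n),
        ‖z₁ - z₂‖ ^ p + a * ‖z₁ - z₂‖ ^ q ≤ c * ⟪A z₁ - A z₂, z₁ - z₂⟫ := by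
  refine ⟨max 1 (4 ^ (q - 1) / ν), le_max_left _ _, fun a ha A hA hcoer z₁ z₂ => ?_⟩
  have key := mul_norm_rpow_add_le_inner_sub (hA.differentiable one_ne_zero) hp hpq.le hν.le ha
    hcoer z₁ z₂
  have hlhs : 0 ≤ ‖z₁ - z₂‖ ^ p + a * ‖z₁ - z₂‖ ^ q := by positivity
  have hinner : 0 ≤ ⟪A z₁ - A z₂, z₁ - z₂⟫ :=
    nonneg_of_mul_nonneg_right (key.trans' (by positivity)) (by positivity)
  calc ‖z₁ - z₂‖ ^ p + a * ‖z₁ - z₂‖ ^ q ≤ 4 ^ (q - 1) / ν * ⟪A z₁ - A z₂, z₁ - z₂⟫ := by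
        rw [div_mul_eq_mul_div, le_div_iff₀ hν, mul_comm]; exact key
    _ ≤ max 1 (4 ^ (q - 1) / ν) * ⟪A z₁ - A z₂, z₁ - z₂⟫ := by
        gcongr; exact le_max_right _ _

/-- Strengthened monotonicity inequality (2.2) of the paper, valid in the
superquadratic range `2 ≤ p < q`. -/
theorem stmt_3 (n : ℕ) (hn : 1 ≤ n) (p q ν : ℝ) (hp : 2 ≤ p) (hpq : p < q) (hν : 0 < ν) :
    ∃ c : ℝ, 1 ≤ c ∧
      ∀ (a : ℝ), 0 ≤ a →
      ∀ (A : EuclideanSpace ℝ (Fin n) → EuclideanSpace ℝ (Fin n)), ContDiff ℝ 1 A →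
      (∀ z ζ : EuclideanSpace ℝ (Fin n),
        ν * (‖z‖ ^ (p - 2) + a * ‖z‖ ^ (q - 2)) * ‖ζ‖ ^ 2 ≤ ⟪(fderiv ℝ A z) ζ, ζ⟫) →
      ∀ z₁ z₂ : EuclideanSpace ℝ (Fin n),
        ‖z₁ - z₂‖ ^ p + a * ‖z₁ - z₂‖ ^ q ≤ c * ⟪A z₁ - A z₂, z₁ - z₂⟫ :=
  stmt_3_general n p q ν hp hpq hν
end

section
/- Let n ≥ 2 be an integer and let p, q, α be reals with 2 ≤ p ≤ n, p < q, α ∈ (0,1], and suppose the condition (q−1)/(p−1) < 1 + α/(n−1) holds. For p̄ ∈ [n(p−1)/(n−1), p] define m(p̄) := max{ n(p̄ + q − p)/(n + p̄ + q − p) , 1 } (the inverse Sobolev conjugate of p̄ + q − p). Then m(p̄) < p̄ for every p̄ ∈ [n(p−1)/(n−1), p]. -/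
/-! Write `d = q - p > 0`. Assumption (1.9) says `d (n-1) < α (p-1) ≤ p - 1`, and together with the
lower bound `n (p-1) ≤ p̄ (n-1)` this gives `n d < p̄`. Since `p̄ > 1`, we get
`n d < p̄ ≤ p̄ (p̄ + d)`, which, after clearing the denominator, is exactly `n (p̄ + d)/(n + p̄ + d) < p̄`. -/

lemma sub_mul_lt_mul_of_div_lt_one_add_div {p q α k : ℝ} (hp : 1 < p) (hk : 0 < k)
    (h : (q - 1) / (p - 1) < 1 + α / k) : (q - p) * k < α * (p - 1) := by
  have hp1 : 0 < p - 1 := by linarith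
  rw [div_lt_iff₀ hp1, add_mul, one_mul, ← sub_lt_iff_lt_add', div_mul_eq_mul_div,
    lt_div_iff₀ hk] at h
  linarith

lemma one_lt_mul_div_sub_one {n a : ℝ} (hn : 1 < n) (ha : 1 ≤ a) : 1 < n * a / (n - 1) := by
  rw [lt_div_iff₀ (by linarith)]
  nlinarith

lemma mul_lt_of_mul_lt_of_mul_le {n d a s k : ℝ} (hn : 0 < n) (hk : 0 < k)
    (hd : d * k < a) (ha : n * a ≤ s * k) : n * d < s := by
  have : n * d * k < s * k := by nlinarith
  exact lt_of_mul_lt_mul_right this hk.le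

lemma mul_add_div_add_add_lt {n s d : ℝ} (hn : 0 ≤ n) (hd : 0 ≤ d) (hs : 1 ≤ s)
    (h : n * d < s) : n * (s + d) / (n + s + d) < s := by
  rw [div_lt_iff₀ (by linarith)]
  nlinarith

theorem stmt_7_general (n : ℕ) (hn : 2 ≤ n) (p q α : ℝ) (hp : 2 ≤ p)
    (hpq : p < q) (hα : α ∈ Set.Ioc (0:ℝ) 1)
    (hrate : (q - 1) / (p - 1) < 1 + α / ((n : ℝ) - 1)) :
    ∀ pbar ∈ Set.Icc ((n : ℝ) * (p - 1) / ((n : ℝ) - 1)) p,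
      max ((n : ℝ) * (pbar + q - p) / ((n : ℝ) + pbar + q - p)) 1 < pbar := by
  rintro pbar ⟨hlo, -⟩
  have hn1 : (1 : ℝ) < n := by exact_mod_cast hn
  have hk : (0 : ℝ) < n - 1 := by linarith
  have hsub : (q - p) * (n - 1) < p - 1 :=
    (sub_mul_lt_mul_of_div_lt_one_add_div (by linarith) hk hrate).trans_le
      (mul_le_of_le_one_left (by linarith) hα.2)
  have hpbar : 1 < pbar := (one_lt_mul_div_sub_one hn1 (by linarith)).trans_le hlo
  have hnd : (n : ℝ) * (q - p) < pbar :=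
    mul_lt_of_mul_lt_of_mul_le (by linarith) hk hsub ((div_le_iff₀ hk).mp hlo)
  rw [add_sub_assoc, add_sub_assoc]
  exact max_lt (mul_add_div_add_add_lt (by linarith) (by linarith) hpbar.le hnd) hpbar

/-- Inequality (3.6) of the paper: `m(p̄) < p̄` on `[n(p-1)/(n-1), p]`, where
`m(p̄) = (p̄ + (q-p))_*` is the inverse Sobolev conjugate of `p̄ + q - p`. -/
theorem stmt_7 (n : ℕ) (hn : 2 ≤ n) (p q α : ℝ) (hp : 2 ≤ p) (hpn : p ≤ (n : ℝ))
    (hpq : p < q) (hα : α ∈ Set.Ioc (0:ℝ) 1)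
    (hrate : (q - 1) / (p - 1) < 1 + α / ((n : ℝ) - 1)) :
    ∀ pbar ∈ Set.Icc ((n : ℝ) * (p - 1) / ((n : ℝ) - 1)) p,
      max ((n : ℝ) * (pbar + q - p) / ((n : ℝ) + pbar + q - p)) 1 < pbar :=
  stmt_7_general n hn p q α hp hpq hα hrate
end

section
/- Let n ≥ 2 be an integer and let p, q, α be reals with 2 ≤ p ≤ n, p < q, α ∈ (0,1], and suppose the condition (q−1)/(p−1) < 1 + α/(n−1) holds. Define κ := (1/2)·( max{ n(q−p)/α , n(n+α)(p−1)/( n(n−1) + (n+α)(p−1) ) } + n(p−1)/(n−1) ), and for p̄ ∈ [n(p−1)/(n−1), p] define m(p̄) := max{ n(p̄ + q − p)/(n + p̄ + q − p) , 1 } (the inverse Sobolev conjugate of p̄ + q − p). Then m( n(p−1)/(n−1) ) < κ. -/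
/-!
Write `A = n(p-1)/(n-1)` and `t = (p-1)(n+α)/(n-1)`. The second entry of the maximum in `κ`
is the inverse Sobolev conjugate `t_* = n t / (n + t)`, and the rate condition on `q` says
exactly that `A + q - p < t`. As `x ↦ x_*` is increasing, `(A + q - p)_* < t_*`; together with
`1 ≤ t_* ≤ A` and `1 < A` this puts both entries of `m(A)` below `(t_* + A) / 2 ≤ κ`.
-/

noncomputable def invSobolevConj (n p : ℝ) : ℝ := n * p / (n + p)

lemma invSobolevConj_strictMonoOn {n : ℝ} (hn : 0 < n) :
    StrictMonoOn (invSobolevConj n) (Set.Ioi 0) := by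
  intro x hx y hy hxy
  simp only [Set.mem_Ioi] at hx hy
  unfold invSobolevConj
  rw [div_lt_div_iff₀ (by linarith) (by linarith)]
  nlinarith [mul_lt_mul_of_pos_left hxy (mul_pos hn hn)]

lemma invSobolevConj_div (n a : ℝ) {d : ℝ} (hd : d ≠ 0) :
    invSobolevConj n (a / d) = n * a / (n * d + a) := by
  unfold invSobolevConj
  rw [show n + a / d = (n * d + a) / d by field_simp, mul_div_assoc', div_div_div_cancel_right₀ hd]

lemma one_le_invSobolevConj {n x : ℝ} (hn : 1 < n) (hx : n ≤ (n - 1) * x) :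
    1 ≤ invSobolevConj n x := by
  have hx0 : 0 < x := by nlinarith
  unfold invSobolevConj
  rw [one_le_div (by linarith)]
  linarith

section Exponents

variable {N p q α : ℝ}

lemma mul_div_sub_one_add_sub_lt (hN : 1 < N) (hp : 1 < p)
    (hrate : (q - 1) / (p - 1) < 1 + α / (N - 1)) :
    N * (p - 1) / (N - 1) + q - p < (p - 1) * (N + α) / (N - 1) := by
  have hN1 : 0 < N - 1 := by linarith
  have hp1 : 0 < p - 1 := by linarith
  have hgap : (q - p) * (N - 1) < α * (p - 1) := by
    rw [div_lt_iff₀ hp1, add_mul, one_mul, div_mul_eq_mul_div, ← sub_lt_iff_lt_add',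
      lt_div_iff₀ hN1] at hrate
    linarith
  rw [← sub_pos]
  have hdiff : (p - 1) * (N + α) / (N - 1) - (N * (p - 1) / (N - 1) + q - p)
      = (α * (p - 1) - (q - p) * (N - 1)) / (N - 1) := by
    field_simp
    ring
  rw [hdiff]
  exact div_pos (by linarith) hN1

lemma invSobolevConj_le_mul_div_sub_one (hN : 1 < N) (hp : 2 ≤ p) (hα : α ∈ Set.Ioc (0 : ℝ) 1) :
    invSobolevConj N ((p - 1) * (N + α) / (N - 1)) ≤ N * (p - 1) / (N - 1) := by
  obtain ⟨hα0, hα1⟩ := hα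
  have hN1 : 0 < N - 1 := by linarith
  rw [invSobolevConj_div _ _ hN1.ne', div_le_div_iff₀ (by nlinarith) hN1]
  have hαt : α * (N - 1) ≤ (p - 1) * (N + α) := by nlinarith
  nlinarith [mul_le_mul_of_nonneg_left hαt (by nlinarith : (0 : ℝ) ≤ N * (p - 1))]

lemma one_le_invSobolevConj_of_two_le (hN : 1 < N) (hp : 2 ≤ p) (hα : 0 ≤ α) :
    1 ≤ invSobolevConj N ((p - 1) * (N + α) / (N - 1)) := by
  have hN1 : 0 < N - 1 := by linarith
  refine one_le_invSobolevConj hN ?_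
  rw [mul_div_cancel₀ _ hN1.ne']
  nlinarith

lemma one_lt_mul_div_sub_one_s8 (hN : 1 < N) (hp : 2 ≤ p) : 1 < N * (p - 1) / (N - 1) := by
  rw [one_lt_div (by linarith)]
  nlinarith

end Exponents

theorem stmt_8_general (n : ℕ) (hn : 2 ≤ n) (p q α : ℝ) (hp : 2 ≤ p)
    (hpq : p < q) (hα : α ∈ Set.Ioc (0:ℝ) 1)
    (hrate : (q - 1) / (p - 1) < 1 + α / ((n : ℝ) - 1)) :
    max ((n : ℝ) * ((n : ℝ) * (p - 1) / ((n : ℝ) - 1) + q - p) /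
        ((n : ℝ) + ((n : ℝ) * (p - 1) / ((n : ℝ) - 1) + q - p))) 1
      < (1/2) * (max ((n : ℝ) * (q - p) / α)
          ((n : ℝ) * ((n : ℝ) + α) * (p - 1) /
            ((n : ℝ) * ((n : ℝ) - 1) + ((n : ℝ) + α) * (p - 1)))
        + (n : ℝ) * (p - 1) / ((n : ℝ) - 1)) := by
  have hN : (1 : ℝ) < n := by exact_mod_cast hn
  set A := (n : ℝ) * (p - 1) / ((n : ℝ) - 1)
  set t := (p - 1) * ((n : ℝ) + α) / ((n : ℝ) - 1)
  have hC : (n : ℝ) * ((n : ℝ) + α) * (p - 1) / ((n : ℝ) * ((n : ℝ) - 1) + ((n : ℝ) + α) * (p - 1))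
      = invSobolevConj n t := by
    rw [invSobolevConj_div _ _ (by linarith)]
    ring
  have hA : 1 < A := one_lt_mul_div_sub_one_s8 hN hp
  have hshift : A + q - p < t := mul_div_sub_one_add_sub_lt hN (by linarith) hrate
  have hlt : invSobolevConj n (A + q - p) < invSobolevConj n t :=
    invSobolevConj_strictMonoOn (by linarith) (show 0 < A + q - p by linarith)
      (show 0 < t by linarith) hshift
  have hCA : invSobolevConj n t ≤ A := invSobolevConj_le_mul_div_sub_one hN hp hα
  have hC1 : 1 ≤ invSobolevConj n t := one_le_invSobolevConj_of_two_le hN hp hα.1.le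
  have hmax := le_max_right ((n : ℝ) * (q - p) / α) (invSobolevConj n t)
  rw [hC]
  change max (invSobolevConj n (A + q - p)) 1 < _
  exact max_lt (by linarith) (by linarith)

/-- Display (3.7) of the paper: `m(n(p-1)/(n-1)) < κ`, where `m` is the inverse
Sobolev conjugate map `m(p̄) = (p̄ + (q-p))_*` and `κ` is the exponent of (3.3). -/
theorem stmt_8 (n : ℕ) (hn : 2 ≤ n) (p q α : ℝ) (hp : 2 ≤ p) (hpn : p ≤ (n : ℝ))
    (hpq : p < q) (hα : α ∈ Set.Ioc (0:ℝ) 1)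
    (hrate : (q - 1) / (p - 1) < 1 + α / ((n : ℝ) - 1)) :
    max ((n : ℝ) * ((n : ℝ) * (p - 1) / ((n : ℝ) - 1) + q - p) /
        ((n : ℝ) + ((n : ℝ) * (p - 1) / ((n : ℝ) - 1) + q - p))) 1
      < (1/2) * (max ((n : ℝ) * (q - p) / α)
          ((n : ℝ) * ((n : ℝ) + α) * (p - 1) /
            ((n : ℝ) * ((n : ℝ) - 1) + ((n : ℝ) + α) * (p - 1)))
        + (n : ℝ) * (p - 1) / ((n : ℝ) - 1)) :=
  stmt_8_general n hn p q α hp hpq hα hrate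
end
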